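/- arXiv:1804.03931 — 2 statements merged into one kernel-verified Lean document; each statement's English description precedes it below -/
import Mathlib

section
/- Let Φ(z) = αz + β + ∫_ℝ (1/(t−z) − t/(1+t²)) ν(t) dt with α ≥ 0, β ∈ ℝ, and ν non-negative non-decreasing on ℝ with ∫₁^∞ ν(t)/t² dt < ∞. Then for z in the upper half-plane, Φ(z) = αz + β + iπν(−∞) + ∫_ℝ log(√(1+t²)/(t−z)) dν(t), where the principal branch of the logarithm is taken and the last integral converges absolutely. -/
/-! `logKernel z t = log (√(1 + t²) / (t - z))` is a primitive of `-nevanlinnaKernel z`; it tends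
to `0` at `+∞` and, since its argument stays in the upper half-plane and tends to `-1`, to `iπ` at
`-∞`. Hence `logKernel z t = ∫_{s ≥ t} nevanlinnaKernel z s ds` and `∫_ℝ nevanlinnaKernel z = iπ`.
Integrating the first identity against `dν` and exchanging the integrals gives
`∫ logKernel z dν = ∫ nevanlinnaKernel z s · ν((-∞, s]) ds = ∫ nevanlinnaKernel z s (ν s - c) ds`
with `c = ν(-∞)`; Tonelli applies because `nevanlinnaKernel z s = O(1 / (1 + s²))` and
`ν s / (1 + s²)` is integrable. -/

open MeasureTheory Complex Filter Set Topology

theorem Set.indicator_setOf_le_apply_eq_indicator_Iic {M : Type*} [Zero M] (g : ℝ → M) (t s : ℝ) :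
    {p : ℝ × ℝ | p.1 ≤ p.2}.indicator (fun p => g p.2) (t, s) =
      (Iic s).indicator (fun _ => g s) t := by
  by_cases h : t ≤ s <;> simp [indicator, h]

theorem Set.indicator_setOf_le_apply_eq_indicator_Ici {M : Type*} [Zero M] (g : ℝ → M) (t s : ℝ) :
    {p : ℝ × ℝ | p.1 ≤ p.2}.indicator (fun p => g p.2) (t, s) = (Ici t).indicator g s := by
  by_cases h : t ≤ s <;> simp [indicator, h]

namespace StieltjesFunction

variable {E : Type*} [NormedAddCommGroup E] [NormedSpace ℝ E]
  {ν : StieltjesFunction ℝ} {c : ℝ} {g : ℝ → E}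

theorem le_of_tendsto_atBot (hc : Tendsto (fun t : ℝ => ν t) atBot (𝓝 c)) (s : ℝ) : c ≤ ν s :=
  le_of_tendsto hc (eventually_atBot.mpr ⟨s, fun _ ht => ν.mono ht⟩)

theorem integral_indicator_Iic_const [CompleteSpace E]
    (hc : Tendsto (fun t : ℝ => ν t) atBot (𝓝 c)) (e : E) (s : ℝ) :
    ∫ t, (Iic s).indicator (fun _ => e) t ∂ν.measure = (ν s - c) • e := by
  rw [integral_indicator_const e measurableSet_Iic, measureReal_def, ν.measure_Iic hc,
    ENNReal.toReal_ofReal (sub_nonneg.mpr (le_of_tendsto_atBot hc s))]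

theorem integrable_indicator_setOf_le (hc : Tendsto (fun t : ℝ => ν t) atBot (𝓝 c))
    (hgm : AEStronglyMeasurable g) (hg : Integrable fun s => (ν s - c) • g s) :
    Integrable ({p : ℝ × ℝ | p.1 ≤ p.2}.indicator fun p => g p.2) (ν.measure.prod volume) := by
  rw [integrable_prod_iff'
    (hgm.comp_snd.indicator (measurableSet_le measurable_fst measurable_snd))]
  simp only [indicator_setOf_le_apply_eq_indicator_Iic, norm_indicator_eq_indicator_norm,
    integral_indicator_Iic_const hc]
  refine ⟨.of_forall fun s => ?_, hg.norm.congr (.of_forall fun s => ?_)⟩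
  · rw [integrable_indicator_iff measurableSet_Iic]
    exact integrableOn_const (by simp [ν.measure_Iic hc])
  · simp only [norm_smul, Real.norm_of_nonneg (sub_nonneg.mpr (le_of_tendsto_atBot hc s)),
      smul_eq_mul]

theorem integrable_setIntegral_Ici (hc : Tendsto (fun t : ℝ => ν t) atBot (𝓝 c))
    (hgm : AEStronglyMeasurable g) (hg : Integrable fun s => (ν s - c) • g s) :
    Integrable (fun t => ∫ s in Ici t, g s) ν.measure := by
  simpa only [indicator_setOf_le_apply_eq_indicator_Ici, integral_indicator measurableSet_Ici] using
    (integrable_indicator_setOf_le hc hgm hg).integral_prod_left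

theorem integral_setIntegral_Ici [CompleteSpace E] (hc : Tendsto (fun t : ℝ => ν t) atBot (𝓝 c))
    (hgm : AEStronglyMeasurable g) (hg : Integrable fun s => (ν s - c) • g s) :
    ∫ t, (∫ s in Ici t, g s) ∂ν.measure = ∫ s, (ν s - c) • g s := by
  calc ∫ t, (∫ s in Ici t, g s) ∂ν.measure
      = ∫ t, (∫ s, {p : ℝ × ℝ | p.1 ≤ p.2}.indicator (fun p => g p.2) (t, s)) ∂ν.measure := by
        simp only [indicator_setOf_le_apply_eq_indicator_Ici, integral_indicator measurableSet_Ici]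
    _ = ∫ s, ∫ t, {p : ℝ × ℝ | p.1 ≤ p.2}.indicator (fun p => g p.2) (t, s) ∂ν.measure :=
        integral_integral_swap
          (f := fun t s => {p : ℝ × ℝ | p.1 ≤ p.2}.indicator (fun p => g p.2) (t, s))
          (integrable_indicator_setOf_le hc hgm hg)
    _ = ∫ s, (ν s - c) • g s := by
        simp only [indicator_setOf_le_apply_eq_indicator_Iic, integral_indicator_Iic_const hc]

end StieltjesFunction

noncomputable def nevanlinnaKernel (z : ℂ) (t : ℝ) : ℂ :=
  1 / ((t : ℂ) - z) - (t : ℂ) / (1 + (t : ℂ) ^ 2)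

noncomputable def logKernel (z : ℂ) (t : ℝ) : ℂ :=
  log ((Real.sqrt (1 + t ^ 2) : ℂ) / ((t : ℂ) - z))

section Kernels

variable {z : ℂ}

theorem ofReal_sub_mem_slitPlane (hz : 0 < z.im) (t : ℝ) : (t : ℂ) - z ∈ slitPlane :=
  mem_slitPlane_iff.mpr (.inr (by simpa using hz.ne'))

theorem ofReal_sub_ne_zero (hz : 0 < z.im) (t : ℝ) : (t : ℂ) - z ≠ 0 :=
  slitPlane_ne_zero (ofReal_sub_mem_slitPlane hz t)

theorem one_add_ofReal_sq_ne_zero (t : ℝ) : 1 + (t : ℂ) ^ 2 ≠ 0 := by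
  exact_mod_cast (by positivity : (1 + t ^ 2 : ℝ) ≠ 0)

theorem nevanlinnaKernel_eq (hz : 0 < z.im) (t : ℝ) :
    nevanlinnaKernel z t = (z + (1 + z ^ 2) / ((t : ℂ) - z)) / (1 + (t : ℂ) ^ 2) := by
  have := ofReal_sub_ne_zero hz t
  have := one_add_ofReal_sq_ne_zero t
  rw [nevanlinnaKernel]
  field_simp
  ring

theorem norm_inv_ofReal_sub_le (hz : 0 < z.im) (t : ℝ) : ‖((t : ℂ) - z)⁻¹‖ ≤ z.im⁻¹ := by
  rw [norm_inv]
  refine inv_anti₀ hz ((abs_im_le_norm _).trans' ?_)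
  simpa using le_abs_self z.im

theorem norm_nevanlinnaKernel_le (hz : 0 < z.im) (t : ℝ) :
    ‖nevanlinnaKernel z t‖ ≤ (‖z‖ + ‖1 + z ^ 2‖ / z.im) / (1 + t ^ 2) := by
  have hnorm : ‖1 + (t : ℂ) ^ 2‖ = 1 + t ^ 2 := by
    norm_cast; exact Real.norm_of_nonneg (by positivity)
  rw [nevanlinnaKernel_eq hz, norm_div, hnorm, div_eq_mul_inv _ ((t : ℂ) - z)]
  gcongr
  calc ‖z + (1 + z ^ 2) * ((t : ℂ) - z)⁻¹‖ ≤ ‖z‖ + ‖1 + z ^ 2‖ * ‖((t : ℂ) - z)⁻¹‖ :=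
        (norm_add_le _ _).trans_eq (by rw [norm_mul])
    _ ≤ ‖z‖ + ‖1 + z ^ 2‖ / z.im := by
        rw [div_eq_mul_inv]; gcongr; exact norm_inv_ofReal_sub_le hz t

theorem continuous_nevanlinnaKernel (hz : 0 < z.im) : Continuous (nevanlinnaKernel z) := by
  unfold nevanlinnaKernel
  exact (continuous_const.div (by fun_prop) (ofReal_sub_ne_zero hz)).sub
    ((by fun_prop : Continuous fun t : ℝ => (t : ℂ)).div (by fun_prop) one_add_ofReal_sq_ne_zero)

theorem integrable_nevanlinnaKernel (hz : 0 < z.im) : Integrable (nevanlinnaKernel z) :=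
  (integrable_inv_one_add_sq.const_mul _).mono'
    (continuous_nevanlinnaKernel hz).aestronglyMeasurable
    (.of_forall fun t => (norm_nevanlinnaKernel_le hz t).trans_eq (div_eq_mul_inv _ _))

theorem logKernel_eq (hz : 0 < z.im) (t : ℝ) :
    logKernel z t = ((Real.log (1 + t ^ 2) / 2 : ℝ) : ℂ) - log ((t : ℂ) - z) := by
  have hmem := mem_slitPlane_iff_arg.mp (ofReal_sub_mem_slitPlane hz t)
  rw [logKernel, div_eq_mul_inv, log_ofReal_mul (by positivity) (inv_ne_zero hmem.2),
    log_inv _ hmem.1, Real.log_sqrt (by positivity), ← sub_eq_add_neg]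

theorem hasDerivAt_logKernel (hz : 0 < z.im) (t : ℝ) :
    HasDerivAt (logKernel z) (-nevanlinnaKernel z t) t := by
  have hlog : HasDerivAt (fun t : ℝ => Real.log (1 + t ^ 2) / 2) (2 * t / (1 + t ^ 2) / 2) t := by
    have := ((hasDerivAt_pow 2 t).const_add 1).log (by positivity)
    simpa using this.div_const 2
  have hclog : HasDerivAt (fun t : ℝ => log ((t : ℂ) - z)) (1 / ((t : ℂ) - z)) t :=
    (((hasDerivAt_id t).ofReal_comp).sub_const z).clog_real (ofReal_sub_mem_slitPlane hz t)
  rw [funext (logKernel_eq hz)]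
  refine (hlog.ofReal_comp.sub hclog).congr_deriv ?_
  simp only [nevanlinnaKernel]
  push_cast
  ring

theorem tendsto_sqrt_one_add_sq_div_sub_atTop (z : ℂ) :
    Tendsto (fun t : ℝ => (Real.sqrt (1 + t ^ 2) : ℂ) / ((t : ℂ) - z)) atTop (𝓝 1) := by
  have hcont : ContinuousAt (fun u : ℝ => (Real.sqrt (1 + u ^ 2) : ℂ) / (1 - z * u)) 0 :=
    ContinuousAt.div (by fun_prop) (by fun_prop) (by simp)
  have hlim : Tendsto (fun u : ℝ => (Real.sqrt (1 + u ^ 2) : ℂ) / (1 - z * u)) (𝓝 0) (𝓝 1) := by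
    simpa using hcont.tendsto
  refine (hlim.comp tendsto_inv_atTop_zero).congr' ((eventually_gt_atTop 0).mono fun t ht => ?_)
  have hsqrt : Real.sqrt (1 + t⁻¹ ^ 2) = Real.sqrt (1 + t ^ 2) / t := by
    rw [show 1 + t⁻¹ ^ 2 = (1 + t ^ 2) / t ^ 2 by field_simp; ring, Real.sqrt_div (by positivity),
      Real.sqrt_sq ht.le]
  have ht' : (t : ℂ) ≠ 0 := by exact_mod_cast ht.ne'
  rw [Function.comp_apply, hsqrt, ofReal_div, div_div, ofReal_inv]
  congr 1
  field_simp

theorem tendsto_sqrt_one_add_sq_div_sub_atBot (z : ℂ) :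
    Tendsto (fun t : ℝ => (Real.sqrt (1 + t ^ 2) : ℂ) / ((t : ℂ) - z)) atBot (𝓝 (-1)) := by
  refine ((tendsto_sqrt_one_add_sq_div_sub_atTop (-z)).neg.comp tendsto_neg_atBot_atTop).congr
    fun t => ?_
  simp only [Function.comp_apply, ofReal_neg, neg_sq, ← div_neg]
  ring_nf

theorem im_sqrt_one_add_sq_div_sub_pos (hz : 0 < z.im) (t : ℝ) :
    0 < ((Real.sqrt (1 + t ^ 2) : ℂ) / ((t : ℂ) - z)).im := by
  rw [div_eq_mul_inv, im_ofReal_mul, inv_im]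
  simp only [sub_im, ofReal_im, zero_sub, neg_neg]
  exact mul_pos (by positivity) (div_pos hz (normSq_pos.mpr (ofReal_sub_ne_zero hz t)))

theorem tendsto_logKernel_atTop (z : ℂ) : Tendsto (logKernel z) atTop (𝓝 0) := by
  have h := (continuousAt_clog (by simp)).tendsto.comp (tendsto_sqrt_one_add_sq_div_sub_atTop z)
  rwa [log_one] at h

theorem tendsto_logKernel_atBot (hz : 0 < z.im) :
    Tendsto (logKernel z) atBot (𝓝 (Real.pi * I)) := by
  have hlog := (continuousWithinAt_log_of_re_neg_of_im_zero (z := -1) (by simp) (by simp)).tendsto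
  rw [log_neg_one] at hlog
  exact hlog.comp (tendsto_nhdsWithin_iff.mpr ⟨tendsto_sqrt_one_add_sq_div_sub_atBot z,
    .of_forall fun t => (im_sqrt_one_add_sq_div_sub_pos hz t).le⟩)

theorem setIntegral_Ici_nevanlinnaKernel (hz : 0 < z.im) (t : ℝ) :
    ∫ s in Ici t, nevanlinnaKernel z s = logKernel z t := by
  have := integral_Ioi_of_hasDerivAt_of_tendsto' (a := t) (fun s _ => hasDerivAt_logKernel hz s)
    (integrable_nevanlinnaKernel hz).neg.integrableOn (tendsto_logKernel_atTop z)
  rw [integral_Ici_eq_integral_Ioi, ← neg_neg (∫ s in Ioi t, _), ← integral_neg, this]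
  simp

theorem integral_nevanlinnaKernel (hz : 0 < z.im) :
    ∫ s, nevanlinnaKernel z s = Real.pi * I := by
  have := integral_of_hasDerivAt_of_tendsto (fun s => hasDerivAt_logKernel hz s)
    (integrable_nevanlinnaKernel hz).neg (tendsto_logKernel_atBot hz) (tendsto_logKernel_atTop z)
  rw [← neg_neg (∫ s, _), ← integral_neg, this]
  simp

end Kernels

theorem Monotone.integrable_div_one_add_sq {ν : ℝ → ℝ} (hmono : Monotone ν)
    (hnonneg : ∀ t, 0 ≤ ν t) (hint : IntegrableOn (fun t => ν t / t ^ 2) (Ici 1)) :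
    Integrable fun t => ν t / (1 + t ^ 2) := by
  have hmeas : AEStronglyMeasurable fun t => ν t / (1 + t ^ 2) :=
    (hmono.measurable.div (by fun_prop)).aestronglyMeasurable
  rw [← integrableOn_univ, ← Iio_union_Ici (a := (1 : ℝ))]
  refine .union ?_ ?_
  · refine (integrable_inv_one_add_sq.const_mul (ν 1)).integrableOn.mono' hmeas.restrict
      ((ae_restrict_iff' measurableSet_Iio).mpr (.of_forall fun t ht => ?_))
    rw [Real.norm_of_nonneg (div_nonneg (hnonneg t) (by positivity)), div_eq_mul_inv]
    gcongr
    exact hmono ht.le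
  · refine hint.mono' hmeas.restrict
      ((ae_restrict_iff' measurableSet_Ici).mpr (.of_forall fun t (ht : 1 ≤ t) => ?_))
    rw [Real.norm_of_nonneg (div_nonneg (hnonneg t) (by positivity))]
    gcongr
    · exact hnonneg t
    · linarith

theorem integrable_nevanlinnaKernel_mul {z : ℂ} (hz : 0 < z.im) {ν : ℝ → ℝ} (hmono : Monotone ν)
    (hnonneg : ∀ t, 0 ≤ ν t) (hint : IntegrableOn (fun t => ν t / t ^ 2) (Ici 1)) :
    Integrable fun t => nevanlinnaKernel z t * ν t := by
  refine ((hmono.integrable_div_one_add_sq hnonneg hint).const_mul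
    (‖z‖ + ‖1 + z ^ 2‖ / z.im)).mono'
    ((continuous_nevanlinnaKernel hz).aestronglyMeasurable.mul
      (measurable_ofReal.comp hmono.measurable).aestronglyMeasurable)
    (.of_forall fun t => ?_)
  rw [norm_mul, norm_real, Real.norm_of_nonneg (hnonneg t), mul_div_assoc', mul_div_right_comm]
  exact mul_le_mul_of_nonneg_right (norm_nevanlinnaKernel_le hz t) (hnonneg t)

theorem stmt_13_general (ν : StieltjesFunction ℝ) (hnonneg : ∀ t, 0 ≤ ν t)
    (hint : IntegrableOn (fun t => ν t / t ^ 2) (Set.Ici (1 : ℝ)))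
    (α β : ℝ)
    (c : ℝ) (hc : Tendsto (fun t : ℝ => ν t) atBot (nhds c))
    (z : ℂ) (hz : 0 < z.im) :
    Integrable (fun t : ℝ =>
        Complex.log ((Real.sqrt (1 + t ^ 2) : ℂ) / ((t : ℂ) - z))) ν.measure ∧
    (α : ℂ) * z + (β : ℂ) +
        ∫ t : ℝ, (1 / ((t : ℂ) - z) - (t : ℂ) / (1 + (t : ℂ) ^ 2)) * (ν t : ℂ) =
      (α : ℂ) * z + (β : ℂ) + Complex.I * Real.pi * (c : ℂ) +
        ∫ t : ℝ, Complex.log ((Real.sqrt (1 + t ^ 2) : ℂ) / ((t : ℂ) - z)) ∂ν.measure := by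
  have hk := integrable_nevanlinnaKernel hz
  have hkν := integrable_nevanlinnaKernel_mul hz ν.mono hnonneg hint
  have hshift (s : ℝ) : (ν s - c) • nevanlinnaKernel z s =
      nevanlinnaKernel z s * ν s - c * nevanlinnaKernel z s := by
    rw [real_smul]; push_cast; ring
  have hshifted : Integrable fun s => (ν s - c) • nevanlinnaKernel z s :=
    (hkν.sub (hk.const_mul c)).congr (.of_forall fun s => (hshift s).symm)
  have hlogInt := ν.integrable_setIntegral_Ici hc hk.aestronglyMeasurable hshifted
  have hlogEq := ν.integral_setIntegral_Ici hc hk.aestronglyMeasurable hshifted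
  simp only [setIntegral_Ici_nevanlinnaKernel hz, hshift] at hlogInt hlogEq
  refine ⟨hlogInt, ?_⟩
  change _ + ∫ t, nevanlinnaKernel z t * ν t = _ + ∫ t, logKernel z t ∂ν.measure
  rw [hlogEq, integral_sub hkν (hk.const_mul c), integral_const_mul, integral_nevanlinnaKernel hz]
  ring

theorem stmt_13 (ν : StieltjesFunction ℝ) (hnonneg : ∀ t, 0 ≤ ν t)
    (hint : IntegrableOn (fun t => ν t / t ^ 2) (Set.Ici (1 : ℝ)))
    (α β : ℝ) (hα : 0 ≤ α)
    (c : ℝ) (hc : Tendsto (fun t : ℝ => ν t) atBot (nhds c))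
    (z : ℂ) (hz : 0 < z.im) :
    Integrable (fun t : ℝ =>
        Complex.log ((Real.sqrt (1 + t ^ 2) : ℂ) / ((t : ℂ) - z))) ν.measure ∧
    (α : ℂ) * z + (β : ℂ) +
        ∫ t : ℝ, (1 / ((t : ℂ) - z) - (t : ℂ) / (1 + (t : ℂ) ^ 2)) * (ν t : ℂ) =
      (α : ℂ) * z + (β : ℂ) + Complex.I * Real.pi * (c : ℂ) +
        ∫ t : ℝ, Complex.log ((Real.sqrt (1 + t ^ 2) : ℂ) / ((t : ℂ) - z)) ∂ν.measure :=
  stmt_13_general ν hnonneg hint α β c hc z hz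
end

section
/- Let f ∈ log P, i.e. f = log Φ for a non-constant Pick function Φ. Then for every δ ∈ (0,1), ∫_ℝ exp(δ·Re f(x+i0)) dx = +∞ and ∫_ℝ exp(−δ·Re f(x+i0)) dx = +∞. -/
/-!
For `|s| < 1` put `w = exp (s (f - iπ/2))`. Since `0 ≤ Im f ≤ π`, we get
`Re w ≥ cos (sπ/2) · exp (s Re f) ≥ 0`. A holomorphic function with nonnegative real part on the
upper half-plane satisfies `∫ Re w(x + iy) / (1 + x²) dx ≤ π Re w((1 + y)i)`: this is the mean
value property on the unit disc, transported by the Cayley transform, with Fatou's lemma as the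
radius tends to `1`. Letting `y → 0` (Fatou again) gives `∫ exp (s Re g(x)) / (1 + x²) dx < ∞`.
Finally `2 / (1 + |x|) ≤ exp u + exp (-u) / (1 + x²)` and `∫ dx / (1 + |x|) = ∞` force both
`∫ exp (±δ Re g) = ∞`.
-/

open Complex MeasureTheory Filter Metric Set Topology
open scoped ENNReal Real

theorem lintegral_le_of_ae_tendsto {ι α : Type*} [MeasurableSpace α] {μ : Measure α}
    {l : Filter ι} [l.IsCountablyGenerated] [l.NeBot] {F : ι → α → ℝ≥0∞} {f : α → ℝ≥0∞}
    {C : ι → ℝ≥0∞} {c : ℝ≥0∞} (hF : ∀ᶠ i in l, AEMeasurable (F i) μ)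
    (hf : ∀ᵐ x ∂μ, Tendsto (F · x) l (𝓝 (f x))) (hFC : ∀ᶠ i in l, ∫⁻ x, F i x ∂μ ≤ C i)
    (hC : Tendsto C l (𝓝 c)) :
    ∫⁻ x, f x ∂μ ≤ c := by
  obtain ⟨u, hu, hFu⟩ := exists_seq_forall_of_frequently (hF.and hFC).frequently
  calc ∫⁻ x, f x ∂μ = ∫⁻ x, liminf (fun n ↦ F (u n) x) atTop ∂μ :=
        lintegral_congr_ae (hf.mono fun x hx ↦ ((hx.comp hu).liminf_eq).symm)
    _ ≤ liminf (fun n ↦ ∫⁻ x, F (u n) x ∂μ) atTop := lintegral_liminf_le' fun n ↦ (hFu n).1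
    _ ≤ liminf (fun n ↦ C (u n)) atTop := liminf_le_liminf (.of_forall fun n ↦ (hFu n).2)
    _ = c := (hC.comp hu).liminf_eq

theorem setLIntegral_ofReal_re_circleMap {W : ℂ → ℂ} {c : ℂ} {R : ℝ}
    (hW : DiffContOnCl ℂ W (ball c |R|)) (hre : ∀ θ, 0 ≤ (W (circleMap c R θ)).re) :
    ∫⁻ θ in Ioo 0 (2 * π), ENNReal.ofReal (W (circleMap c R θ)).re
      = ENNReal.ofReal (2 * π * (W c).re) := by
  have hint : CircleIntegrable W c R :=
    (hW.continuousOn_ball.mono sphere_subset_closedBall).circleIntegrable'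
  have hmean : Real.circleAverage (fun z ↦ (W z).re) c R = (W c).re := by
    rw [← hW.circleAverage]
    exact reCLM.circleAverage_comp_comm hint
  rw [Real.circleAverage_def, smul_eq_mul, inv_mul_eq_iff_eq_mul₀ Real.two_pi_pos.ne',
    intervalIntegral.integral_of_le Real.two_pi_pos.le, integral_Ioc_eq_integral_Ioo] at hmean
  rw [← hmean]
  exact (ofReal_integral_eq_lintegral_ofReal ((Integrable.re hint.1).mono_measure
    (Measure.restrict_mono Ioo_subset_Ioc_self le_rfl)) (.of_forall fun θ ↦ hre θ)).symm

theorem circleMap_zero_one_ne_one {θ : ℝ} (hθ : θ ∈ Ioo 0 (2 * π)) : circleMap 0 1 θ ≠ 1 := by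
  intro h
  have h0 : circleMap 0 1 θ = circleMap 0 1 0 := by simpa [circleMap] using h
  have := eq_of_circleMap_eq one_ne_zero (by rw [sub_zero, abs_of_pos hθ.1]; exact hθ.2) h0
  exact hθ.1.ne' this

theorem setLIntegral_ofReal_re_circleMap_one_le {W : ℂ → ℂ}
    (hW : ∀ ζ ∈ closedBall (0 : ℂ) 1, ζ ≠ 1 → DifferentiableAt ℂ W ζ)
    (hre : ∀ ζ ∈ ball (0 : ℂ) 1, 0 ≤ (W ζ).re) :
    ∫⁻ θ in Ioo 0 (2 * π), ENNReal.ofReal (W (circleMap 0 1 θ)).re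
      ≤ ENNReal.ofReal (2 * π * (W 0).re) := by
  have hball : ∀ ζ ∈ ball (0 : ℂ) 1, DifferentiableAt ℂ W ζ := fun ζ hζ ↦
    hW ζ (ball_subset_closedBall hζ) (by rintro rfl; simp at hζ)
  have hmem : ∀ {r : ℝ}, r ∈ Ioo 0 1 → ∀ θ, circleMap 0 r θ ∈ ball (0 : ℂ) 1 := fun hr θ ↦ by
    simp [abs_of_pos hr.1, hr.2]
  refine lintegral_le_of_ae_tendsto (l := 𝓝[<] 1)
    (F := fun r θ ↦ ENNReal.ofReal (W (circleMap 0 r θ)).re) ?_ ?_ ?_ tendsto_const_nhds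
  · filter_upwards [Ioo_mem_nhdsLT zero_lt_one] with r hr
    refine (ENNReal.continuous_ofReal.comp (continuous_re.comp ?_)).aemeasurable
    exact continuous_iff_continuousAt.2 fun θ ↦
      (hball _ (hmem hr θ)).continuousAt.comp (continuous_circleMap 0 r).continuousAt
  · refine (ae_restrict_iff' measurableSet_Ioo).2 (.of_forall fun θ hθ ↦ ?_)
    have hcont : ContinuousAt W (circleMap 0 1 θ) :=
      (hW _ (by simp) (circleMap_zero_one_ne_one hθ)).continuousAt
    have hrad : Continuous fun r : ℝ ↦ circleMap 0 r θ := by unfold circleMap; fun_prop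
    exact (ENNReal.continuous_ofReal.tendsto _).comp ((continuous_re.tendsto _).comp
      (hcont.tendsto.comp ((hrad.tendsto 1).mono_left nhdsWithin_le_nhds)))
  · filter_upwards [Ioo_mem_nhdsLT zero_lt_one] with r hr
    refine (setLIntegral_ofReal_re_circleMap ?_ fun θ ↦ hre _ (hmem hr θ)).le
    refine DifferentiableOn.diffContOnCl fun ζ hζ ↦ (hball ζ ?_).differentiableWithinAt
    have := closure_ball_subset_closedBall hζ
    simp only [mem_closedBall, dist_zero_right, abs_of_pos hr.1] at this
    simpa using this.trans_lt hr.2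

noncomputable def cayley (ζ : ℂ) : ℂ := I * (1 + ζ) / (1 - ζ)

theorem cayley_zero : cayley 0 = I := by simp [cayley]

theorem im_cayley (ζ : ℂ) : (cayley ζ).im = (1 - normSq ζ) / normSq (1 - ζ) := by
  simp only [cayley, div_im, mul_re, mul_im, I_re, I_im, normSq_apply, add_re, add_im, sub_re,
    sub_im, one_re, one_im]
  ring

theorem im_cayley_nonneg {ζ : ℂ} (hζ : ‖ζ‖ ≤ 1) : 0 ≤ (cayley ζ).im := by
  rw [im_cayley, normSq_eq_norm_sq]
  exact div_nonneg (by nlinarith [norm_nonneg ζ]) (normSq_nonneg _)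

theorem differentiableAt_cayley {ζ : ℂ} (hζ : ζ ≠ 1) : DifferentiableAt ℂ cayley ζ :=
  (differentiableAt_const _ |>.mul (differentiableAt_const _ |>.add differentiableAt_id)).div
    (differentiableAt_const _ |>.sub differentiableAt_id) (sub_ne_zero.2 hζ.symm)

theorem cayley_sub_I_div_add_I (x : ℝ) : cayley ((x - I) / (x + I)) = x := by
  have hx : (x : ℂ) + I ≠ 0 := fun h ↦ by simpa using congrArg im h
  rw [cayley]
  field_simp
  ring

theorem circleMap_pi_add_two_mul_arctan (x : ℝ) :
    circleMap 0 1 (π + 2 * Real.arctan x) = (x - I) / (x + I) := by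
  have hx : (x : ℂ) + I ≠ 0 := fun h ↦ by simpa using congrArg im h
  have hsq : (0 : ℝ) < 1 + x ^ 2 := by positivity
  have hexp : exp (Real.arctan x * I) = (1 + x * I) / (Real.sqrt (1 + x ^ 2) : ℂ) := by
    rw [exp_mul_I, ← ofReal_cos, ← ofReal_sin, Real.cos_arctan, Real.sin_arctan]
    push_cast
    ring
  have hsqrt : ((Real.sqrt (1 + x ^ 2) : ℝ) : ℂ) ^ 2 = 1 + x ^ 2 := by
    rw [← ofReal_pow, Real.sq_sqrt hsq.le]; push_cast; ring
  calc circleMap 0 1 (π + 2 * Real.arctan x) = - exp (Real.arctan x * I) ^ 2 := by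
        simp only [circleMap, ofReal_one, one_mul, zero_add, ← exp_nat_mul]
        push_cast
        rw [add_mul, exp_add, exp_pi_mul_I]
        ring_nf
    _ = (x - I) / (x + I) := by
        rw [hexp, div_pow, hsqrt]
        have h1 : (1 + (x : ℂ) ^ 2) ≠ 0 := by exact_mod_cast hsq.ne'
        field_simp
        linear_combination (-(2 * x + x ^ 3 + x ^ 2 * I)) * I_sq

theorem setLIntegral_Ioo_circleMap_eq (F : ℂ → ℝ≥0∞) :
    ∫⁻ θ in Ioo 0 (2 * π), F (circleMap 0 1 θ)
      = ∫⁻ x : ℝ, ENNReal.ofReal (2 / (1 + x ^ 2)) * F ((x - I) / (x + I)) := by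
  have himage : (fun x ↦ π + 2 * Real.arctan x) '' univ = Ioo 0 (2 * π) := by
    ext θ
    simp only [image_univ, mem_range, mem_Ioo]
    constructor
    · rintro ⟨x, rfl⟩
      constructor <;> linarith [Real.neg_pi_div_two_lt_arctan x, Real.arctan_lt_pi_div_two x]
    · rintro ⟨h0, h2π⟩
      refine ⟨Real.tan ((θ - π) / 2), ?_⟩
      rw [Real.arctan_tan (by linarith) (by linarith)]
      ring
  have hderiv (x : ℝ) : HasDerivAt (fun x ↦ π + 2 * Real.arctan x) (2 / (1 + x ^ 2)) x :=
    (((Real.hasDerivAt_arctan x).const_mul 2).const_add π).congr_deriv (by ring)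
  have hmono : Monotone fun x ↦ π + 2 * Real.arctan x :=
    (Real.arctan_strictMono.monotone.const_mul zero_le_two).const_add π
  rw [← himage, lintegral_image_eq_lintegral_deriv_mul_of_monotoneOn MeasurableSet.univ
    (fun x _ ↦ (hderiv x).hasDerivWithinAt) (hmono.monotoneOn _), Measure.restrict_univ]
  simp_rw [circleMap_pi_add_two_mul_arctan]

theorem lintegral_ofReal_re_div_one_add_sq_le {w : ℂ → ℂ}
    (hw : DifferentiableOn ℂ w {z | 0 < z.im}) (hre : ∀ z, 0 < z.im → 0 ≤ (w z).re)
    {y : ℝ} (hy : 0 < y) :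
    ∫⁻ x : ℝ, ENNReal.ofReal ((w (x + y * I)).re / (1 + x ^ 2))
      ≤ ENNReal.ofReal (π * (w ((1 + y) * I)).re) := by
  have him {ζ : ℂ} (hζ : ζ ∈ closedBall (0 : ℂ) 1) : 0 < (cayley ζ + y * I).im := by
    have := im_cayley_nonneg (mem_closedBall_zero_iff.1 hζ)
    simp only [add_im, mul_im, ofReal_re, ofReal_im, I_re, I_im]
    linarith
  have hdisc := setLIntegral_ofReal_re_circleMap_one_le (W := fun ζ ↦ w (cayley ζ + y * I))
    (fun ζ hζ hζ1 ↦ ((hw.differentiableAt ((isOpen_im_gt 0).mem_nhds (him hζ))).comp ζ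
      ((differentiableAt_cayley hζ1).add_const _)))
    (fun ζ hζ ↦ hre _ (him (ball_subset_closedBall hζ)))
  rw [setLIntegral_Ioo_circleMap_eq fun ζ ↦ ENNReal.ofReal (w (cayley ζ + y * I)).re] at hdisc
  simp only [cayley_sub_I_div_add_I, cayley_zero] at hdisc
  refine (ENNReal.mul_le_mul_iff_right two_ne_zero ENNReal.ofNat_ne_top).1 ?_
  calc 2 * ∫⁻ x : ℝ, ENNReal.ofReal ((w (x + y * I)).re / (1 + x ^ 2))
      = ∫⁻ x : ℝ, ENNReal.ofReal (2 / (1 + x ^ 2)) * ENNReal.ofReal (w (x + y * I)).re := by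
        rw [← lintegral_const_mul' _ _ ENNReal.ofNat_ne_top]
        refine lintegral_congr fun x ↦ ?_
        rw [← ENNReal.ofReal_mul (by positivity), ← ENNReal.ofReal_ofNat 2,
          ← ENNReal.ofReal_mul zero_le_two]
        congr 1
        ring
    _ ≤ ENNReal.ofReal (2 * π * (w (I + y * I)).re) := hdisc
    _ = 2 * ENNReal.ofReal (π * (w ((1 + y) * I)).re) := by
        rw [← ENNReal.ofReal_ofNat 2, ← ENNReal.ofReal_mul zero_le_two, add_mul, one_mul, mul_assoc]

theorem continuous_comp_add_mul_I {E : Type*} [TopologicalSpace E] {w : ℂ → E}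
    (hw : ContinuousOn w {z | 0 < z.im}) {y : ℝ} (hy : 0 < y) : Continuous fun x : ℝ ↦ w (x + y * I) :=
  hw.comp_continuous (by fun_prop) fun x ↦ by simpa using hy

theorem lintegral_ofReal_re_boundary_div_one_add_sq_le {w : ℂ → ℂ}
    (hw : DifferentiableOn ℂ w {z | 0 < z.im}) (hre : ∀ z, 0 < z.im → 0 ≤ (w z).re)
    {G : ℝ → ℂ} (hG : ∀ᵐ x : ℝ, Tendsto (fun y : ℝ ↦ w (x + y * I)) (𝓝[>] 0) (𝓝 (G x))) :
    ∫⁻ x : ℝ, ENNReal.ofReal ((G x).re / (1 + x ^ 2)) ≤ ENNReal.ofReal (π * (w I).re) := by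
  have hwI : ContinuousAt w I :=
    (hw.differentiableAt ((isOpen_im_gt 0).mem_nhds (by simp))).continuousAt
  have hC : ContinuousAt (fun y : ℝ ↦ ENNReal.ofReal (π * (w ((1 + y) * I)).re)) 0 := by
    refine ENNReal.continuous_ofReal.continuousAt.comp (continuousAt_const.mul
      (continuous_re.continuousAt.comp ?_))
    exact ContinuousAt.comp (g := w) (by simpa using hwI) (by fun_prop)
  refine lintegral_le_of_ae_tendsto (l := 𝓝[>] (0 : ℝ))
    (F := fun (y x : ℝ) ↦ ENNReal.ofReal ((w (x + y * I)).re / (1 + x ^ 2))) ?_ ?_ ?_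
    (by simpa using hC.tendsto.mono_left nhdsWithin_le_nhds)
  · filter_upwards [self_mem_nhdsWithin] with y hy
    exact (ENNReal.continuous_ofReal.comp ((continuous_re.comp
      (continuous_comp_add_mul_I hw.continuousOn hy)).div (by fun_prop)
      fun x ↦ by positivity)).aemeasurable
  · filter_upwards [hG] with x hx
    exact (ENNReal.continuous_ofReal.tendsto _).comp
      (((continuous_re.tendsto _).comp hx).div_const _)
  · filter_upwards [self_mem_nhdsWithin] with y hy
    exact lintegral_ofReal_re_div_one_add_sq_le hw hre hy

theorem cos_mul_pi_div_two_mul_exp_le_re_exp {s : ℝ} (hs : |s| ≤ 1) {z : ℂ}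
    (hz : z.im ∈ Icc 0 π) :
    Real.cos (s * (π / 2)) * Real.exp (s * z.re) ≤ (exp (s * (z - π / 2 * I))).re := by
  have harg : |s * (z.im - π / 2)| ≤ |s| * (π / 2) := by
    rw [abs_mul]
    gcongr
    rw [abs_le]
    constructor <;> linarith [hz.1, hz.2]
  have hcos : Real.cos (s * (π / 2)) ≤ Real.cos (s * (z.im - π / 2)) := by
    rw [← Real.cos_abs (s * (π / 2)), ← Real.cos_abs (s * (z.im - π / 2)), abs_mul,
      abs_of_pos Real.pi_div_two_pos]
    refine Real.cos_le_cos_of_nonneg_of_le_pi (abs_nonneg _) ?_ harg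
    nlinarith [Real.pi_pos, abs_nonneg s]
  have hre : (exp (s * (z - π / 2 * I))).re
      = Real.exp (s * z.re) * Real.cos (s * (z.im - π / 2)) := by
    simp [exp_re]
  rw [hre, mul_comm]
  exact mul_le_mul_of_nonneg_left hcos (Real.exp_pos _).le

theorem two_div_one_add_abs_le (u x : ℝ) :
    2 / (1 + |x|) ≤ Real.exp u + Real.exp (-u) / (1 + x ^ 2) := by
  set t := Real.exp (-u)
  set p := 1 + |x|
  have ht : 0 < t := Real.exp_pos _
  have hp : 0 < p := by positivity
  have hamgm : t⁻¹ + t / p ^ 2 - 2 / p = (p - t) ^ 2 / (t * p ^ 2) := by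
    field_simp
    ring
  have hp2 : 1 + x ^ 2 ≤ p ^ 2 := by nlinarith [abs_nonneg x, sq_abs x]
  calc 2 / p ≤ t⁻¹ + t / p ^ 2 := by
        nlinarith [hamgm, div_nonneg (sq_nonneg (p - t)) (by positivity : (0 : ℝ) ≤ t * p ^ 2)]
    _ ≤ Real.exp u + t / (1 + x ^ 2) := by
        rw [show t⁻¹ = Real.exp u by simp [t, Real.exp_neg]]
        gcongr

theorem lintegral_ofReal_two_div_one_add_abs_eq_top :
    ∫⁻ x : ℝ, ENNReal.ofReal (2 / (1 + |x|)) = ⊤ := by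
  by_contra h
  have hint : Integrable fun x : ℝ ↦ 2 / (1 + |x|) :=
    (lintegral_ofReal_ne_top_iff_integrable (continuous_const.div (by fun_prop)
      fun x ↦ (by positivity : (0 : ℝ) < 1 + |x|).ne').aestronglyMeasurable
      (.of_forall fun x ↦ by dsimp; positivity)).1 h
  refine not_integrableOn_Ioi_inv (a := 1) (hint.integrableOn.mono'
    measurable_inv.aestronglyMeasurable ((ae_restrict_iff' measurableSet_Ioi).2
      (.of_forall fun x (hx : 1 < x) ↦ ?_)))
  rw [norm_inv, Real.norm_eq_abs, abs_of_pos (by linarith), inv_eq_one_div,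
    div_le_div_iff₀ (by linarith) (by linarith)]
  linarith

theorem lintegral_ofReal_exp_eq_top {u : ℝ → ℝ} (hu : AEMeasurable u)
    (h : ∫⁻ x, ENNReal.ofReal (Real.exp (-u x) / (1 + x ^ 2)) < ⊤) :
    ∫⁻ x, ENNReal.ofReal (Real.exp (u x)) = ⊤ := by
  have hle : ⊤ ≤ (∫⁻ x, ENNReal.ofReal (Real.exp (u x)))
      + ∫⁻ x, ENNReal.ofReal (Real.exp (-u x) / (1 + x ^ 2)) :=
    calc ⊤ = ∫⁻ x : ℝ, ENNReal.ofReal (2 / (1 + |x|)) :=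
          lintegral_ofReal_two_div_one_add_abs_eq_top.symm
      _ ≤ ∫⁻ x, (ENNReal.ofReal (Real.exp (u x))
            + ENNReal.ofReal (Real.exp (-u x) / (1 + x ^ 2))) := lintegral_mono fun x ↦ by
          rw [← ENNReal.ofReal_add (by positivity) (by positivity)]
          exact ENNReal.ofReal_le_ofReal (two_div_one_add_abs_le _ _)
      _ = _ := lintegral_add_left' (Real.measurable_exp.comp_aemeasurable hu).ennreal_ofReal _
  exact (ENNReal.add_eq_top.1 (top_le_iff.1 hle)).resolve_right h.ne

theorem lintegral_ofReal_exp_mul_re_div_one_add_sq_lt_top {f : ℂ → ℂ}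
    (hf : DifferentiableOn ℂ f {z | 0 < z.im}) (him : ∀ z, 0 < z.im → (f z).im ∈ Icc 0 π)
    {g : ℝ → ℂ} (hg : ∀ᵐ x : ℝ, Tendsto (fun y : ℝ ↦ f (x + y * I)) (𝓝[>] 0) (𝓝 (g x)))
    {s : ℝ} (hs : |s| < 1) :
    ∫⁻ x : ℝ, ENNReal.ofReal (Real.exp (s * (g x).re) / (1 + x ^ 2)) < ⊤ := by
  set c := Real.cos (s * (π / 2))
  have hc : 0 < c := by
    obtain ⟨hs₁, hs₂⟩ := abs_lt.1 hs
    exact Real.cos_pos_of_mem_Ioo ⟨by nlinarith [Real.pi_pos], by nlinarith [Real.pi_pos]⟩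
  set E : ℂ → ℂ := fun z ↦ exp (s * (z - π / 2 * I))
  have hE : Continuous E := by fun_prop
  have hg_im : ∀ᵐ x : ℝ, (g x).im ∈ Icc 0 π := by
    filter_upwards [hg] with x hx
    exact isClosed_Icc.mem_of_tendsto ((continuous_im.tendsto _).comp hx)
      (eventually_nhdsWithin_of_forall fun y (hy : 0 < y) ↦ him _ (by simpa using hy))
  have hbound := lintegral_ofReal_re_boundary_div_one_add_sq_le (w := E ∘ f)
    (((hf.sub_const _).const_mul _).cexp)
    (fun z hz ↦ (mul_nonneg hc.le (Real.exp_pos _).le).trans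
      (cos_mul_pi_div_two_mul_exp_le_re_exp hs.le (him z hz)))
    (hg.mono fun x hx ↦ (hE.tendsto _).comp hx)
  calc ∫⁻ x : ℝ, ENNReal.ofReal (Real.exp (s * (g x).re) / (1 + x ^ 2))
      ≤ ∫⁻ x : ℝ, ENNReal.ofReal c⁻¹ * ENNReal.ofReal ((E (g x)).re / (1 + x ^ 2)) := by
        refine lintegral_mono_ae ?_
        filter_upwards [hg_im] with x hx
        rw [← ENNReal.ofReal_mul (inv_nonneg.2 hc.le), ← mul_div_assoc]
        refine ENNReal.ofReal_le_ofReal (div_le_div_of_nonneg_right ?_ (by positivity))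
        exact (le_inv_mul_iff₀ hc).2 (cos_mul_pi_div_two_mul_exp_le_re_exp hs.le hx)
    _ = ENNReal.ofReal c⁻¹ * ∫⁻ x : ℝ, ENNReal.ofReal ((E (g x)).re / (1 + x ^ 2)) :=
        lintegral_const_mul' _ _ ENNReal.ofReal_ne_top
    _ < ⊤ := ENNReal.mul_lt_top ENNReal.ofReal_lt_top (hbound.trans_lt ENNReal.ofReal_lt_top)

theorem aemeasurable_of_ae_tendsto_vertical {E : Type*} [TopologicalSpace E]
    [TopologicalSpace.PseudoMetrizableSpace E] [MeasurableSpace E] [BorelSpace E] {f : ℂ → E}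
    (hf : ContinuousOn f {z | 0 < z.im}) {g : ℝ → E}
    (hg : ∀ᵐ x : ℝ, Tendsto (fun y : ℝ ↦ f (x + y * I)) (𝓝[>] 0) (𝓝 (g x))) :
    AEMeasurable g := by
  have hpos : ∀ᶠ y in 𝓝[>] (0 : ℝ), 0 < y := self_mem_nhdsWithin
  obtain ⟨u, hu, hu_pos⟩ := exists_seq_forall_of_frequently hpos.frequently
  exact aemeasurable_of_tendsto_metrizable_ae atTop (f := fun n (x : ℝ) ↦ f (x + u n * I))
    (fun n ↦ (continuous_comp_add_mul_I hf (hu_pos n)).aemeasurable)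
    (hg.mono fun x hx ↦ hx.comp hu)

theorem stmt_17 (f : ℂ → ℂ)
    (hdiff : DifferentiableOn ℂ f {z : ℂ | 0 < z.im})
    (him : ∀ z : ℂ, 0 < z.im → (f z).im ∈ Set.Icc (0 : ℝ) Real.pi)
    (g : ℝ → ℂ)
    (hbdry : ∀ᵐ x : ℝ, Tendsto (fun y : ℝ => f ((x : ℂ) + (y : ℂ) * Complex.I))
      (nhdsWithin 0 (Set.Ioi 0)) (nhds (g x))) :
    ∀ δ ∈ Set.Ioo (0 : ℝ) 1,
      (∫⁻ x : ℝ, ENNReal.ofReal (Real.exp (δ * (g x).re))) = ⊤ ∧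
      (∫⁻ x : ℝ, ENNReal.ofReal (Real.exp (-δ * (g x).re))) = ⊤ := by
  intro δ hδ
  have hg : AEMeasurable fun x ↦ (g x).re :=
    measurable_re.comp_aemeasurable (aemeasurable_of_ae_tendsto_vertical hdiff.continuousOn hbdry)
  have hfin {s : ℝ} (hs : |s| < 1) :=
    lintegral_ofReal_exp_mul_re_div_one_add_sq_lt_top hdiff him hbdry hs
  have hδ₁ : |δ| < 1 := by rw [abs_of_pos hδ.1]; exact hδ.2
  constructor
  · refine lintegral_ofReal_exp_eq_top (hg.const_mul δ) ?_
    simpa only [neg_mul] using hfin (s := -δ) (by rwa [abs_neg])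
  · refine lintegral_ofReal_exp_eq_top (hg.const_mul (-δ)) ?_
    simpa only [neg_mul, neg_neg] using hfin hδ₁
end
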